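/- Let X1, X2, X3 be mutually independent random variables on a common probability space taking values in finite sets, each with entropy a. Let Y11, Y12, Y21, Y22 be finite-valued random variables with H(Y12) ≤ a and H(Y22) ≤ a, such that Y12 is a deterministic function of (Y11, X3). If H((X1, X2) | (Y12, Y22)) ≤ ε for some ε ≥ 0, then H((Y11, Y21, Y22) | X3) ≥ 2a − 2ε. -/

import Mathlib

/-!
Write every entropy as an expectation, `H(X) = E[-log P(X = x)]` at `x = X`.
Since `Y12` is a function of `(Y11, X3)`, `H(Y11, Y21, Y22 | X3) ≥ H(Y12, Y22, X3) - H(X3)`.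
By independence `H(X1, X2, X3) = 3a`, and
`H(X1, X2, X3) ≤ H(Y12, Y22, X3) + H(X1, X2 | Y12, Y22, X3) ≤ H(Y12, Y22, X3) + ε`,
because conditioning on more variables does not increase entropy. That is submodularity of
entropy, which is Gibbs' inequality against the joint law modified to make `(X1, X2)` and `X3`
conditionally independent given `(Y12, Y22)`. Hence the conditional entropy is at least
`2a - ε ≥ 2a - 2ε`.
-/

open scoped BigOperators

/-- The probability that the random variable `X` (on finite sample space `Ω`
with probability mass function `μ`) takes the value `a`. -/
noncomputable def probOf {Ω : Type} [Fintype Ω] {α : Type} [DecidableEq α]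
    (μ : Ω → ℝ) (X : Ω → α) (a : α) : ℝ :=
  ∑ ω : Ω, if X ω = a then μ ω else 0

/-- Shannon entropy (natural-log base) of a finite-valued random variable. -/
noncomputable def entropy {Ω : Type} [Fintype Ω] {α : Type} [Fintype α] [DecidableEq α]
    (μ : Ω → ℝ) (X : Ω → α) : ℝ :=
  ∑ a : α, -(probOf μ X a * Real.log (probOf μ X a))

/-- Conditional entropy `H(X | Y) = H(X, Y) - H(Y)`. -/
noncomputable def condEntropy {Ω : Type} [Fintype Ω] {α β : Type}
    [Fintype α] [DecidableEq α] [Fintype β] [DecidableEq β]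
    (μ : Ω → ℝ) (X : Ω → α) (Y : Ω → β) : ℝ :=
  entropy μ (fun ω => (X ω, Y ω)) - entropy μ Y

/-- `μ` is a probability mass function on the finite sample space `Ω`. -/
def IsPMF {Ω : Type} [Fintype Ω] (μ : Ω → ℝ) : Prop :=
  (∀ ω, 0 ≤ μ ω) ∧ ∑ ω : Ω, μ ω = 1

/-- Independence of two finite-valued random variables: the joint distribution
factorizes. -/
def IndepRV {Ω : Type} [Fintype Ω] {α β : Type} [DecidableEq α] [DecidableEq β]
    (μ : Ω → ℝ) (X : Ω → α) (Y : Ω → β) : Prop :=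
  ∀ a b, probOf μ (fun ω => (X ω, Y ω)) (a, b) = probOf μ X a * probOf μ Y b

/-- Mutual independence of three finite-valued random variables: the joint
distribution factorizes. -/
def MutIndep3 {Ω : Type} [Fintype Ω] {α β γ : Type}
    [DecidableEq α] [DecidableEq β] [DecidableEq γ]
    (μ : Ω → ℝ) (X : Ω → α) (Y : Ω → β) (Z : Ω → γ) : Prop :=
  ∀ a b c, probOf μ (fun ω => (X ω, Y ω, Z ω)) (a, b, c) =
    probOf μ X a * probOf μ Y b * probOf μ Z c

open Real

section
variable {Ω : Type} [Fintype Ω] {μ : Ω → ℝ} {α β γ : Type}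
  [DecidableEq α] [DecidableEq β] [DecidableEq γ]

lemma probOf_nonneg (hμ : ∀ ω, 0 ≤ μ ω) (X : Ω → α) (a : α) : 0 ≤ probOf μ X a :=
  Finset.sum_nonneg fun ω _ => by split_ifs <;> simp [hμ ω]

lemma probOf_pos (hμ : ∀ ω, 0 ≤ μ ω) (X : Ω → α) {ω : Ω} (hω : 0 < μ ω) :
    0 < probOf μ X (X ω) :=
  lt_of_lt_of_le (by simpa using hω)
    (Finset.single_le_sum (f := fun ω' => if X ω' = X ω then μ ω' else 0)
      (fun ω' _ => by split_ifs <;> simp [hμ ω']) (Finset.mem_univ ω))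

lemma sum_probOf_mul [Fintype α] (X : Ω → α) (φ : α → ℝ) :
    ∑ a, probOf μ X a * φ a = ∑ ω, μ ω * φ (X ω) := by
  simp only [probOf, Finset.sum_mul, ite_mul, zero_mul]
  rw [Finset.sum_comm]
  simp

lemma sum_probOf [Fintype α] (hμ : ∑ ω, μ ω = 1) (X : Ω → α) : ∑ a, probOf μ X a = 1 := by
  simpa [hμ] using sum_probOf_mul (μ := μ) X fun _ => 1

lemma probOf_comp [Fintype α] {X : Ω → α} {Y : Ω → β} (f : α → β) (h : ∀ ω, Y ω = f (X ω))
    (b : β) :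
    probOf μ Y b = ∑ a, if f a = b then probOf μ X a else 0 := by
  simpa [probOf, h] using (sum_probOf_mul (μ := μ) X fun a => if f a = b then 1 else 0).symm

lemma probOf_le_probOf_comp [Fintype α] (hμ : ∀ ω, 0 ≤ μ ω) {X : Ω → α} {Y : Ω → β}
    (f : α → β) (h : ∀ ω, Y ω = f (X ω)) (a : α) : probOf μ X a ≤ probOf μ Y (f a) := by
  rw [probOf_comp f h]
  simpa using Finset.single_le_sum (f := fun a' => if f a' = f a then probOf μ X a' else 0)
    (fun a' _ => by split_ifs <;> simp [probOf_nonneg hμ]) (Finset.mem_univ a)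

lemma sum_probOf_pair_left [Fintype α] [Fintype β] (X : Ω → α) (Y : Ω → β) (b : β) :
    ∑ a, probOf μ (fun ω => (X ω, Y ω)) (a, b) = probOf μ Y b := by
  rw [probOf_comp (X := fun ω => (X ω, Y ω)) Prod.snd (fun _ => rfl), Fintype.sum_prod_type]
  simp

lemma sum_probOf_pair_right [Fintype α] [Fintype β] (X : Ω → α) (Y : Ω → β) (a : α) :
    ∑ b, probOf μ (fun ω => (X ω, Y ω)) (a, b) = probOf μ X a := by
  rw [probOf_comp (X := fun ω => (X ω, Y ω)) Prod.fst (fun _ => rfl), Fintype.sum_prod_type]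
  rw [Finset.sum_eq_single a (fun a' _ ha' => by simp [ha']) (by simp)]
  simp

lemma entropy_eq_sum_mul_neg_log [Fintype α] (X : Ω → α) :
    entropy μ X = ∑ ω, μ ω * -log (probOf μ X (X ω)) := by
  rw [entropy, ← sum_probOf_mul X fun a => -log (probOf μ X a)]
  exact Finset.sum_congr rfl fun _ _ => by ring

lemma mul_log_sub_log_le {p q : ℝ} (hp : 0 ≤ p) (hq : 0 ≤ q) (hpq : 0 < p → 0 < q) :
    p * (log q - log p) ≤ q - p := by
  rcases hp.eq_or_lt with rfl | hp
  · simpa using hq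
  have hq_pos := hpq hp
  calc p * (log q - log p) = p * log (q / p) := by rw [log_div hq_pos.ne' hp.ne']
    _ ≤ p * (q / p - 1) := by gcongr; exact log_le_sub_one_of_pos (div_pos hq_pos hp)
    _ = q - p := by field_simp

/-- Gibbs' inequality. -/
lemma entropy_le_sum_mul_neg_log [Fintype α] (hμ : ∀ ω, 0 ≤ μ ω) (hμ1 : ∑ ω, μ ω = 1)
    (X : Ω → α) {g : α → ℝ} (hg : ∀ a, 0 ≤ g a) (hg1 : ∑ a, g a ≤ 1)
    (hgX : ∀ a, 0 < probOf μ X a → 0 < g a) :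
    entropy μ X ≤ ∑ ω, μ ω * -log (g (X ω)) := by
  have key : entropy μ X - ∑ ω, μ ω * -log (g (X ω))
      = ∑ a, probOf μ X a * (log (g a) - log (probOf μ X a)) := by
    rw [← sum_probOf_mul X fun a => -log (g a), entropy, ← Finset.sum_sub_distrib]
    exact Finset.sum_congr rfl fun _ _ => by ring
  have : ∑ a, probOf μ X a * (log (g a) - log (probOf μ X a)) ≤ ∑ a, (g a - probOf μ X a) :=
    Finset.sum_le_sum fun a _ => mul_log_sub_log_le (probOf_nonneg hμ X a) (hg a) (hgX a)
  rw [Finset.sum_sub_distrib, sum_probOf hμ1] at this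
  linarith

lemma entropy_le_of_comp [Fintype α] [Fintype β] (hμ : ∀ ω, 0 ≤ μ ω) {X : Ω → α} {Y : Ω → β}
    (f : α → β) (h : ∀ ω, Y ω = f (X ω)) : entropy μ Y ≤ entropy μ X := by
  rw [entropy_eq_sum_mul_neg_log, entropy_eq_sum_mul_neg_log]
  refine Finset.sum_le_sum fun ω _ => ?_
  rcases (hμ ω).eq_or_lt with h0 | hpos
  · simp [← h0]
  gcongr
  · exact probOf_pos hμ X hpos
  · rw [h ω]; exact probOf_le_probOf_comp hμ f h (X ω)

lemma entropy_triple_of_mutIndep3 [Fintype α] [Fintype β] [Fintype γ] (hμ : ∀ ω, 0 ≤ μ ω)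
    {X : Ω → α} {Y : Ω → β} {Z : Ω → γ} (h : MutIndep3 μ X Y Z) :
    entropy μ (fun ω => (X ω, Y ω, Z ω)) = entropy μ X + entropy μ Y + entropy μ Z := by
  simp only [entropy_eq_sum_mul_neg_log, ← Finset.sum_add_distrib]
  refine Finset.sum_congr rfl fun ω _ => ?_
  rcases (hμ ω).eq_or_lt with h0 | hpos
  · simp [← h0]
  rw [h, log_mul (mul_pos (probOf_pos hμ X hpos) (probOf_pos hμ Y hpos)).ne'
    (probOf_pos hμ Z hpos).ne', log_mul (probOf_pos hμ X hpos).ne' (probOf_pos hμ Y hpos).ne']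
  ring

lemma entropy_submodular [Fintype α] [Fintype β] [Fintype γ] (hμ : ∀ ω, 0 ≤ μ ω)
    (hμ1 : ∑ ω, μ ω = 1)
    (U : Ω → α) (W : Ω → β) (Z : Ω → γ) :
    entropy μ (fun ω => (U ω, W ω, Z ω)) + entropy μ W
      ≤ entropy μ (fun ω => (U ω, W ω)) + entropy μ (fun ω => (W ω, Z ω)) := by
  set r := probOf μ (fun ω => (U ω, W ω))
  set q := probOf μ (fun ω => (W ω, Z ω))
  set s := probOf μ W
  -- the law of `U` and `Z` made conditionally independent given `W`
  let g : α × β × γ → ℝ := fun x => r (x.1, x.2.1) * q (x.2.1, x.2.2) / s x.2.1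
  have hg : ∀ x, 0 ≤ g x := fun x => by
    have := probOf_nonneg hμ (fun ω => (U ω, W ω)) (x.1, x.2.1)
    have := probOf_nonneg hμ (fun ω => (W ω, Z ω)) (x.2.1, x.2.2)
    have := probOf_nonneg hμ W x.2.1
    positivity
  have hg1 : ∑ x, g x = 1 := by
    calc ∑ x, g x = ∑ b, (∑ a, r (a, b)) * (∑ c, q (b, c)) / s b := by
          simp only [g, Fintype.sum_prod_type, Finset.sum_mul_sum, Finset.sum_div]
          exact Finset.sum_comm
      _ = ∑ b, s b := by
          simp only [r, q, s, sum_probOf_pair_left, sum_probOf_pair_right, mul_self_div_self]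
      _ = 1 := sum_probOf hμ1 W
  have hgX : ∀ x, 0 < probOf μ (fun ω => (U ω, W ω, Z ω)) x → 0 < g x := by
    rintro x hx
    have hr := probOf_le_probOf_comp hμ (X := fun ω => (U ω, W ω, Z ω))
      (Y := fun ω => (U ω, W ω)) (fun x => (x.1, x.2.1)) (fun _ => rfl) x
    have hq := probOf_le_probOf_comp hμ (X := fun ω => (U ω, W ω, Z ω))
      (Y := fun ω => (W ω, Z ω)) Prod.snd (fun _ => rfl) x
    have hs := probOf_le_probOf_comp hμ (X := fun ω => (U ω, W ω, Z ω))
      (Y := W) (fun x => x.2.1) (fun _ => rfl) x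
    exact div_pos (mul_pos (hx.trans_le hr) (hx.trans_le hq)) (hx.trans_le hs)
  have hcross : ∑ ω, μ ω * -log (g (U ω, W ω, Z ω))
      = entropy μ (fun ω => (U ω, W ω)) + entropy μ (fun ω => (W ω, Z ω)) - entropy μ W := by
    simp only [entropy_eq_sum_mul_neg_log, ← Finset.sum_add_distrib, ← Finset.sum_sub_distrib]
    refine Finset.sum_congr rfl fun ω _ => ?_
    rcases (hμ ω).eq_or_lt with h0 | hpos
    · simp [← h0]
    have hr := probOf_pos hμ (fun ω => (U ω, W ω)) hpos
    have hq := probOf_pos hμ (fun ω => (W ω, Z ω)) hpos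
    have hs := probOf_pos hμ W hpos
    simp only [g]
    rw [log_div (mul_pos hr hq).ne' hs.ne', log_mul hr.ne' hq.ne']
    ring
  linarith [entropy_le_sum_mul_neg_log hμ hμ1 _ hg hg1.le hgX]

lemma condEntropy_pair_le [Fintype α] [Fintype β] [Fintype γ] (hμ : ∀ ω, 0 ≤ μ ω)
    (hμ1 : ∑ ω, μ ω = 1)
    (U : Ω → α) (W : Ω → β) (Z : Ω → γ) :
    condEntropy μ U (fun ω => (W ω, Z ω)) ≤ condEntropy μ U W := by
  have := entropy_submodular hμ hμ1 U W Z
  simp only [condEntropy]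
  linarith

end

theorem stmt4_general {Ω α₁ α₂ α₃ β₁₁ β₁₂ β₂₁ β₂₂ : Type} [Fintype Ω]
    [Fintype α₁] [DecidableEq α₁] [Fintype α₂] [DecidableEq α₂]
    [Fintype α₃] [DecidableEq α₃]
    [Fintype β₁₁] [DecidableEq β₁₁] [Fintype β₁₂] [DecidableEq β₁₂]
    [Fintype β₂₁] [DecidableEq β₂₁] [Fintype β₂₂] [DecidableEq β₂₂]
    (μ : Ω → ℝ) (hμ : IsPMF μ)
    (X1 : Ω → α₁) (X2 : Ω → α₂) (X3 : Ω → α₃)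
    (Y11 : Ω → β₁₁) (Y12 : Ω → β₁₂) (Y21 : Ω → β₂₁) (Y22 : Ω → β₂₂)
    (a ε : ℝ) (hε : 0 ≤ ε)
    (hindep : MutIndep3 μ X1 X2 X3)
    (hX1 : entropy μ X1 = a) (hX2 : entropy μ X2 = a) (hX3 : entropy μ X3 = a)
    (hf12 : ∃ f : β₁₁ × α₃ → β₁₂, ∀ ω, Y12 ω = f (Y11 ω, X3 ω))
    (hcond : condEntropy μ (fun ω => (X1 ω, X2 ω)) (fun ω => (Y12 ω, Y22 ω)) ≤ ε) :
    2 * a - 2 * ε ≤ condEntropy μ (fun ω => (Y11 ω, Y21 ω, Y22 ω)) X3 := by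
  obtain ⟨hμ0, hμ1⟩ := hμ
  obtain ⟨f, hf⟩ := hf12
  have hX : entropy μ (fun ω => (X1 ω, X2 ω, X3 ω)) = 3 * a := by
    rw [entropy_triple_of_mutIndep3 hμ0 hindep, hX1, hX2, hX3]; ring
  have hY_le : entropy μ (fun ω => ((Y12 ω, Y22 ω), X3 ω))
      ≤ entropy μ (fun ω => ((Y11 ω, Y21 ω, Y22 ω), X3 ω)) :=
    entropy_le_of_comp hμ0 (fun y => ((f (y.1.1, y.2), y.1.2.2), y.2)) fun ω => by rw [hf]
  have hX_le : entropy μ (fun ω => (X1 ω, X2 ω, X3 ω))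
      ≤ entropy μ (fun ω => ((X1 ω, X2 ω), ((Y12 ω, Y22 ω), X3 ω))) :=
    entropy_le_of_comp hμ0 (fun x => (x.1.1, x.1.2, x.2.2)) fun _ => rfl
  have hcondX3 := (condEntropy_pair_le hμ0 hμ1 (fun ω => (X1 ω, X2 ω))
    (fun ω => (Y12 ω, Y22 ω)) X3).trans hcond
  simp only [condEntropy] at hcondX3 ⊢
  linarith

/-- With `X1, X2, X3` mutually independent of entropy `a` each,
`H(Y12) ≤ a`, `H(Y22) ≤ a`, `Y12` a deterministic function of `(Y11, X3)`, and
`H((X1,X2) | (Y12,Y22)) ≤ ε` with `ε ≥ 0`, we have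
`H((Y11, Y21, Y22) | X3) ≥ 2a - 2ε`. -/
theorem stmt4 {Ω α₁ α₂ α₃ β₁₁ β₁₂ β₂₁ β₂₂ : Type} [Fintype Ω]
    [Fintype α₁] [DecidableEq α₁] [Fintype α₂] [DecidableEq α₂]
    [Fintype α₃] [DecidableEq α₃]
    [Fintype β₁₁] [DecidableEq β₁₁] [Fintype β₁₂] [DecidableEq β₁₂]
    [Fintype β₂₁] [DecidableEq β₂₁] [Fintype β₂₂] [DecidableEq β₂₂]
    (μ : Ω → ℝ) (hμ : IsPMF μ)
    (X1 : Ω → α₁) (X2 : Ω → α₂) (X3 : Ω → α₃)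
    (Y11 : Ω → β₁₁) (Y12 : Ω → β₁₂) (Y21 : Ω → β₂₁) (Y22 : Ω → β₂₂)
    (a ε : ℝ) (hε : 0 ≤ ε)
    (hindep : MutIndep3 μ X1 X2 X3)
    (hX1 : entropy μ X1 = a) (hX2 : entropy μ X2 = a) (hX3 : entropy μ X3 = a)
    (hY12 : entropy μ Y12 ≤ a) (hY22 : entropy μ Y22 ≤ a)
    (hf12 : ∃ f : β₁₁ × α₃ → β₁₂, ∀ ω, Y12 ω = f (Y11 ω, X3 ω))
    (hcond : condEntropy μ (fun ω => (X1 ω, X2 ω)) (fun ω => (Y12 ω, Y22 ω)) ≤ ε) :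
    2 * a - 2 * ε ≤ condEntropy μ (fun ω => (Y11 ω, Y21 ω, Y22 ω)) X3 :=
  stmt4_general μ hμ X1 X2 X3 Y11 Y12 Y21 Y22 a ε hε hindep hX1 hX2 hX3 hf12 hcond
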